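/- Let g be a 3-Lie algebra and N a Nijenhuis operator. Then for any k ≥ 1, [x₁,x₂,x₃]_{N^{k+1}} = ([x₁,x₂,x₃]_{N^k})_N, where [x₁,x₂,x₃]_M := [Mx₁,x₂,x₃]+[x₁,Mx₂,x₃]+[x₁,x₂,Mx₃]−M[x₁,x₂,x₃] and ([·,·,·]_{N^k})_N denotes applying the deformation-by-N construction to the bracket [·,·,·]_{N^k}. -/
import Mathlib


/-- Deformation of a trilinear bracket `μ` by a linear operator `M`:
`μ_M(x₁,x₂,x₃) = μ(Mx₁,x₂,x₃) + μ(x₁,Mx₂,x₃) + μ(x₁,x₂,Mx₃) − M μ(x₁,x₂,x₃)`. -/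
def deform {K : Type*} [Field K] {g : Type*} [AddCommGroup g] [Module K g]
    (M : Module.End K g) (μ : g → g → g → g) : g → g → g → g :=
  fun x y z => μ (M x) y z + μ x (M y) z + μ x y (M z) - M (μ x y z)

/-- `N` is a Nijenhuis operator for the 3-Lie bracket `b`: conditions (17) and (15). -/
def IsNijenhuis {K : Type*} [Field K] {g : Type*} [AddCommGroup g] [Module K g]
    (b : g →ₗ[K] g →ₗ[K] g →ₗ[K] g) (N : Module.End K g) : Prop :=
  (∀ x y z, N (deform N (fun u v w => b u v w) x y z)
      = b (N x) (N y) z + b (N x) y (N z) + b x (N y) (N z))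
  ∧ (∀ x y z, b (N x) (N y) (N z) = 0)

lemma nijenhuis_pow_apply_succ {K : Type*} [Field K] {g : Type*} [AddCommGroup g] [Module K g]
    (N : Module.End K g) (m : ℕ) (w : g) : (N ^ (m + 1)) w = N ((N ^ m) w) := by
  rw [pow_succ', Module.End.mul_apply]

lemma nijenhuis_pow_comm {K : Type*} [Field K] {g : Type*} [AddCommGroup g] [Module K g]
    (N : Module.End K g) (m : ℕ) (w : g) : (N ^ m) (N w) = N ((N ^ m) w) := by
  rw [← Module.End.mul_apply, ← Module.End.mul_apply, ← pow_succ, pow_succ']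

lemma nijenhuis_key {K : Type*} [Field K] {g : Type*} [AddCommGroup g] [Module K g]
    (b : g →ₗ[K] g →ₗ[K] g →ₗ[K] g) (N : Module.End K g) (hN : IsNijenhuis b N) :
    ∀ (j : ℕ) (x y z : g),
      b (N x) ((N ^ (j+1)) y) z + b (N x) y ((N ^ (j+1)) z) + b x (N y) ((N ^ (j+1)) z)
      + b ((N ^ (j+1)) x) (N y) z + b ((N ^ (j+1)) x) y (N z) + b x ((N ^ (j+1)) y) (N z)
      = (N ^ (j+1)) (b (N x) y z + b x (N y) z + b x y (N z) - N (b x y z))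
        + N (b ((N ^ (j+1)) x) y z + b x ((N ^ (j+1)) y) z + b x y ((N ^ (j+1)) z)
              - (N ^ (j+1)) (b x y z)) := by
  intro j
  induction j with
  | zero =>
    intro x y z
    have h := hN.1 x y z
    simp only [deform] at h
    simp only [map_add, map_sub] at h
    simp only [zero_add, pow_one, map_add, map_sub]
    linear_combination (norm := module) (-2:ℤ) • h
  | succ j ih =>
    intro x y z
    have H1 := hN.1 ((N ^ (j+1)) x) y z
    have H2 := hN.1 x ((N ^ (j+1)) y) z
    have H3 := hN.1 x y ((N ^ (j+1)) z)
    have Z1 := hN.2 ((N ^ j) x) y z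
    have Z2 := hN.2 x ((N ^ j) y) z
    have Z3 := hN.2 x y ((N ^ j) z)
    have hIH := congrArg (fun w => N w) (ih x y z)
    simp only [deform, map_add, map_sub, nijenhuis_pow_apply_succ, nijenhuis_pow_comm]
      at H1 H2 H3 Z1 Z2 Z3 hIH ⊢
    linear_combination (norm := module) hIH - H1 - H2 - H3 - Z1 - Z2 - Z3

/-- Lemma 4.3: for a Nijenhuis operator `N` and `k ≥ 1`,
`[x₁,x₂,x₃]_{N^{k+1}} = ([x₁,x₂,x₃]_{N^k})_N`. -/
theorem threeLie_nijenhuis_power_succ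
    {K : Type*} [Field K] {g : Type*} [AddCommGroup g] [Module K g]
    (b : g →ₗ[K] g →ₗ[K] g →ₗ[K] g)
    (hb1 : ∀ x y z, b x y z = - b y x z)
    (hb2 : ∀ x y z, b x y z = - b x z y)
    (hfi : ∀ x₁ x₂ y₁ y₂ y₃, b x₁ x₂ (b y₁ y₂ y₃)
      = b (b x₁ x₂ y₁) y₂ y₃ + b y₁ (b x₁ x₂ y₂) y₃ + b y₁ y₂ (b x₁ x₂ y₃))
    (N : Module.End K g) (hN : IsNijenhuis b N) :
    ∀ (k : ℕ), 1 ≤ k → ∀ x₁ x₂ x₃ : g,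
      deform (N ^ (k + 1)) (fun u v w => b u v w) x₁ x₂ x₃
        = deform N (deform (N ^ k) (fun u v w => b u v w)) x₁ x₂ x₃ := by
  intro k hk x y z
  obtain ⟨j, rfl⟩ : ∃ j, k = j + 1 := ⟨k - 1, (Nat.succ_pred_eq_of_pos hk).symm⟩
  have key := nijenhuis_key b N hN j x y z
  simp only [deform, map_add, map_sub, nijenhuis_pow_apply_succ, nijenhuis_pow_comm]
    at key ⊢
  linear_combination (norm := module) - key
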